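/- arXiv:1305.5066 — 8 statements merged into one kernel-verified Lean document; each statement's English description precedes it below -/
import Mathlib

section
/- Let $f: \Omega_x \times \Omega_y \to \mathbb{R}$, fix points $x_1,\dots,x_Q \in \Omega_x$ and $y_1,\dots,y_Q \in \Omega_y$ such that the matrix $M_Q = [f(x_i, y_j)]_{i,j=1}^Q$ is invertible and satisfies the maximum volume condition $|\det M_Q| \ge |\det M_q(y)|$ for all $q = 1,\dots,Q$ and all $y \in \Omega_y$, where $M_q(y)$ arises from $M_Q$ by replacing its $q$-th column with the vector $(f(x_1,y),\dots,f(x_Q,y))^T$. Then $\sigma_2[f] := \sup_{y \in \Omega_y} \| M_Q^{-1} (f(x_1,y),\dots,f(x_Q,y))^T \|_{\ell^1} \le Q$. -/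
/-! By Cramer's rule the `q`-th entry of `M⁻¹ *ᵥ b` is `det (M.updateCol q b) / det M`, so the
maximum volume condition bounds every entry by `1` in absolute value and the `ℓ¹` norm by `Q`. -/

namespace Matrix

variable {n : Type*} [Fintype n] [DecidableEq n]

/-- Cramer's rule, valid for every square matrix over a field thanks to `(0 : K)⁻¹ = 0`. -/
theorem inv_mulVec_apply {K : Type*} [Field K] (A : Matrix n n K) (b : n → K) (i : n) :
    (A⁻¹ *ᵥ b) i = (A.updateCol i b).det / A.det := by
  rw [inv_def, Ring.inverse_eq_inv', smul_mulVec, ← cramer_eq_adjugate_mulVec, Pi.smul_apply,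
    cramer_apply, smul_eq_mul, div_eq_inv_mul]

theorem abs_inv_mulVec_apply_le_one {K : Type*} [Field K] [LinearOrder K] [IsStrictOrderedRing K]
    (A : Matrix n n K) (b : n → K) (i : n) (h : |(A.updateCol i b).det| ≤ |A.det|) :
    |(A⁻¹ *ᵥ b) i| ≤ 1 := by
  rw [inv_mulVec_apply, abs_div]
  exact div_le_one_of_le₀ h (abs_nonneg _)

end Matrix

theorem maxvol_sigma2_le_general {Ωx Ωy : Type*} {Q : ℕ}
    (f : Ωx → Ωy → ℝ) (x : Fin Q → Ωx)
    (M : Matrix (Fin Q) (Fin Q) ℝ)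
    (hmaxvol : ∀ (q : Fin Q) (y' : Ωy),
      |(M.updateCol q (fun i => f (x i) y')).det| ≤ |M.det|) :
    ∀ y' : Ωy, ∑ q : Fin Q, |(M⁻¹.mulVec fun i => f (x i) y') q| ≤ (Q : ℝ) := by
  intro y'
  calc ∑ q : Fin Q, |(M⁻¹.mulVec fun i => f (x i) y') q|
      ≤ ∑ _q : Fin Q, (1 : ℝ) :=
        Finset.sum_le_sum fun q _ => M.abs_inv_mulVec_apply_le_one _ q (hmaxvol q y')
    _ = Q := by simp

/-- Under the maximum volume condition, the ℓ¹ norm of `M_Q⁻¹ (f(x₁,y),…,f(x_Q,y))ᵀ`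
is bounded by `Q`, i.e. `σ₂[f] ≤ Q`. -/
theorem maxvol_sigma2_le {Ωx Ωy : Type*} {Q : ℕ}
    (f : Ωx → Ωy → ℝ) (x : Fin Q → Ωx) (y : Fin Q → Ωy)
    (M : Matrix (Fin Q) (Fin Q) ℝ) (hM : M = Matrix.of fun i j => f (x i) (y j))
    (hMinv : IsUnit M.det)
    (hmaxvol : ∀ (q : Fin Q) (y' : Ωy),
      |(M.updateCol q (fun i => f (x i) y')).det| ≤ |M.det|) :
    ∀ y' : Ωy, ∑ q : Fin Q, |(M⁻¹.mulVec fun i => f (x i) y') q| ≤ (Q : ℝ) :=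
  maxvol_sigma2_le_general f x M hmaxvol
end

section
/- With $r_0 = f$ and $r_q(x,y) = r_{q-1}(x,y) - \frac{r_{q-1}(x, y_q)\, r_{q-1}(x_q, y)}{r_{q-1}(x_q, y_q)}$ as in the ACA recursion with $r_{q-1}(x_q,y_q) \neq 0$ at each step, the cross interpolant satisfies $\mathfrak{I}_Q[f_y](x) = \sum_{q=1}^Q r_{q-1}(x, y_q)\, \frac{r_{q-1}(x_q, y)}{r_{q-1}(x_q, y_q)}$, and consequently $f(x,y) = \mathfrak{I}_Q[f_y](x) + r_Q(x,y)$ for all $(x,y) \in \Omega_x \times \Omega_y$, where $\mathfrak{I}_Q[f_y](x) = (f(x,y_1),\dots,f(x,y_Q))\, M_Q^{-1}\, (f(x_1,y),\dots,f(x_Q,y))^T$ with $M_Q = [f(x_i,y_j)]_{i,j=1}^Q$. -/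
noncomputable def bcoef (c : ℕ → ℕ → ℝ) (d : ℕ → ℝ) : ℕ → ℕ → ℝ
  | q, j => ((if q = j then (1:ℝ) else 0)
      - ∑ p ∈ (Finset.range q).attach, c q p.1 * bcoef c d p.1 j) * d q
  decreasing_by exact Finset.mem_range.mp p.2

lemma bcoef_zero (c : ℕ → ℕ → ℝ) (d : ℕ → ℝ) : ∀ q j, q < j → bcoef c d q j = 0 := by
  intro q
  induction q using Nat.strong_induction_on with
  | _ q ih =>
    intro j hj
    rw [bcoef]
    have h1 : q ≠ j := Nat.ne_of_lt hj
    have h2 : ∀ p ∈ (Finset.range q).attach, c q p.1 * bcoef c d p.1 j = 0 := by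
      intro p _
      rw [ih p.1 (Finset.mem_range.mp p.2) j (lt_trans (Finset.mem_range.mp p.2) hj)]
      ring
    rw [Finset.sum_eq_zero h2]
    simp [h1]

section aux
variable {Ωx Ωy : Type*}
    (f : Ωx → Ωy → ℝ) (X : ℕ → Ωx) (Y : ℕ → Ωy)
    (r : ℕ → Ωx → Ωy → ℝ)
    (hr0 : r 0 = f)
    (hpiv : ∀ q, r q (X q) (Y q) ≠ 0)
    (hrec : ∀ q x y,
      r (q + 1) x y = r q x y - r q x (Y q) * r q (X q) y / r q (X q) (Y q))

include hr0 hrec in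
lemma aca_tele : ∀ q x y, f x y =
    (∑ p ∈ Finset.range q, r p x (Y p) * r p (X p) y / r p (X p) (Y p)) + r q x y := by
  intro q
  induction q with
  | zero => intro x y; simp [hr0]
  | succ q ih =>
    intro x y
    rw [Finset.sum_range_succ, hrec, ih x y]
    ring

include hpiv hrec in
lemma aca_zc : ∀ q p, p < q → ∀ x, r q x (Y p) = 0 := by
  intro q
  induction q with
  | zero => intro p hp; exact absurd hp (Nat.not_lt_zero p)
  | succ q ih =>
    intro p hp x
    rcases Nat.lt_succ_iff_lt_or_eq.mp hp with h | h
    · rw [hrec, ih p h x, ih p h (X q)]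
      simp
    · subst h
      rw [hrec, mul_div_assoc, div_self (hpiv p), mul_one, sub_self]

omit hpiv in
include hr0 hrec in
lemma aca_bspec : ∀ q y, r q (X q) y / r q (X q) (Y q)
    = ∑ j ∈ Finset.range (q+1),
        bcoef (fun a b => r b (X a) (Y b)) (fun a => (r a (X a) (Y a))⁻¹) q j * f (X j) y := by
  set c : ℕ → ℕ → ℝ := fun a b => r b (X a) (Y b) with hc
  set d : ℕ → ℝ := fun a => (r a (X a) (Y a))⁻¹ with hd
  intro q
  induction q using Nat.strong_induction_on with
  | _ q ih =>
    intro y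
    have hq : r q (X q) y = f (X q) y
        - ∑ p ∈ Finset.range q, c q p * (r p (X p) y / r p (X p) (Y p)) := by
      have h := aca_tele f X Y r hr0 hrec q (X q) y
      simp only [mul_div_assoc] at h
      simp only [hc]
      linarith
    have hih : ∀ p ∈ Finset.range q, r p (X p) y / r p (X p) (Y p)
        = ∑ j ∈ Finset.range (q+1), bcoef c d p j * f (X j) y := by
      intro p hp
      have hp' := Finset.mem_range.mp hp
      rw [ih p hp' y]
      apply Finset.sum_subset
      · exact Finset.range_subset_range.mpr (by omega)
      · intro j _ hj
        rw [bcoef_zero c d p j (by simp [Finset.mem_range] at hj; omega)]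
        ring
    have unfold : ∀ j, bcoef c d q j
        = ((if q = j then (1:ℝ) else 0)
            - ∑ p ∈ (Finset.range q).attach, c q p.1 * bcoef c d p.1 j) * d q := by
      intro j; rw [bcoef]
    calc r q (X q) y / r q (X q) (Y q)
        = (f (X q) y - ∑ p ∈ Finset.range q, c q p * (r p (X p) y / r p (X p) (Y p))) * d q := by
          rw [div_eq_mul_inv, hq]
      _ = ((∑ j ∈ Finset.range (q+1), (if q = j then (1:ℝ) else 0) * f (X j) y)
            - ∑ j ∈ Finset.range (q+1),
                (∑ p ∈ (Finset.range q).attach, c q p.1 * bcoef c d p.1 j) * f (X j) y) * d q := by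
          congr 1
          congr 1
          · simp only [ite_mul, one_mul, zero_mul]
            rw [Finset.sum_ite_eq]
            simp
          · calc ∑ p ∈ Finset.range q, c q p * (r p (X p) y / r p (X p) (Y p))
                = ∑ p ∈ Finset.range q, ∑ j ∈ Finset.range (q+1), c q p * bcoef c d p j * f (X j) y := by
                  refine Finset.sum_congr rfl fun p hp => ?_
                  rw [hih p hp, Finset.mul_sum]
                  refine Finset.sum_congr rfl fun j _ => by ring
              _ = ∑ p ∈ (Finset.range q).attach, ∑ j ∈ Finset.range (q+1), c q p.1 * bcoef c d p.1 j * f (X j) y := by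
                  exact (Finset.sum_attach _ _).symm
              _ = ∑ j ∈ Finset.range (q+1), (∑ p ∈ (Finset.range q).attach, c q p.1 * bcoef c d p.1 j) * f (X j) y := by
                  rw [Finset.sum_comm]
                  refine Finset.sum_congr rfl fun j _ => by rw [Finset.sum_mul]
      _ = ∑ j ∈ Finset.range (q+1), bcoef c d q j * f (X j) y := by
          rw [← Finset.sum_sub_distrib, Finset.sum_mul]
          refine Finset.sum_congr rfl fun j _ => ?_
          rw [unfold j]
          ring

end aux

/-- The incremental ACA construction produces exactly the cross approximation:
`𝔍_Q[f_y](x) = ∑_{q=1}^Q r_{q-1}(x,y_q) r_{q-1}(x_q,y) / r_{q-1}(x_q,y_q)` and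
consequently `f(x,y) = 𝔍_Q[f_y](x) + r_Q(x,y)`, where
`𝔍_Q[f_y](x) = (f(x,y₁),…,f(x,y_Q)) M_Q⁻¹ (f(x₁,y),…,f(x_Q,y))ᵀ`. -/
theorem aca_equals_cross_approximation {Ωx Ωy : Type*} {Q : ℕ}
    (f : Ωx → Ωy → ℝ) (X : ℕ → Ωx) (Y : ℕ → Ωy)
    (r : ℕ → Ωx → Ωy → ℝ)
    (hr0 : r 0 = f)
    (hpiv : ∀ q, r q (X q) (Y q) ≠ 0)
    (hrec : ∀ q x y,
      r (q + 1) x y = r q x y - r q x (Y q) * r q (X q) y / r q (X q) (Y q))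
    (M : Matrix (Fin Q) (Fin Q) ℝ)
    (hM : M = Matrix.of fun i j : Fin Q => f (X (i : ℕ)) (Y (j : ℕ)))
    (hMinv : IsUnit M.det) :
    ∀ (x : Ωx) (y : Ωy),
      (∑ q ∈ Finset.range Q, r q x (Y q) * r q (X q) y / r q (X q) (Y q))
        = ∑ i : Fin Q, ∑ j : Fin Q, f x (Y (i : ℕ)) * M⁻¹ i j * f (X (j : ℕ)) y ∧
      f x y
        = (∑ i : Fin Q, ∑ j : Fin Q, f x (Y (i : ℕ)) * M⁻¹ i j * f (X (j : ℕ)) y)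
          + r Q x y := by
  intro x y
  set c : ℕ → ℕ → ℝ := fun a b => r b (X a) (Y b) with hcdef
  set d : ℕ → ℝ := fun a => (r a (X a) (Y a))⁻¹ with hddef
  set cN : ℕ → ℝ := fun j => ∑ q ∈ Finset.range Q, r q x (Y q) * bcoef c d q j with hcN
  -- rewrite the ACA sum as a combination of the f (X j) ·
  have hS : ∀ y' : Ωy, (∑ q ∈ Finset.range Q, r q x (Y q) * r q (X q) y' / r q (X q) (Y q))
      = ∑ j ∈ Finset.range Q, cN j * f (X j) y' := by
    intro y'
    calc ∑ q ∈ Finset.range Q, r q x (Y q) * r q (X q) y' / r q (X q) (Y q)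
        = ∑ q ∈ Finset.range Q, r q x (Y q) * ∑ j ∈ Finset.range Q, bcoef c d q j * f (X j) y' := by
          refine Finset.sum_congr rfl fun q hq => ?_
          rw [mul_div_assoc, aca_bspec f X Y r hr0 hrec q y']
          congr 1
          apply Finset.sum_subset (Finset.range_subset_range.mpr (Finset.mem_range.mp hq))
          intro j _ hj
          rw [bcoef_zero c d q j (by simp [Finset.mem_range] at hj; omega)]
          ring
      _ = ∑ j ∈ Finset.range Q, cN j * f (X j) y' := by
          simp only [Finset.mul_sum]
          rw [Finset.sum_comm]
          refine Finset.sum_congr rfl fun j _ => ?_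
          simp only [hcN, Finset.sum_mul]
          exact Finset.sum_congr rfl fun q _ => by ring
  set cv : Fin Q → ℝ := fun j => cN (j : ℕ) with hcv
  set cv' : Fin Q → ℝ := fun j => ∑ i : Fin Q, f x (Y (i : ℕ)) * M⁻¹ i j with hcv'
  have h1 : ∀ i : Fin Q, ∑ j : Fin Q, cv j * M j i = f x (Y (i : ℕ)) := by
    intro i
    have : ∑ j : Fin Q, cv j * M j i = ∑ j ∈ Finset.range Q, cN j * f (X j) (Y (i : ℕ)) := by
      rw [Finset.sum_range fun j => cN j * f (X j) (Y (i : ℕ))]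
      exact Finset.sum_congr rfl fun j _ => by rw [hM]; rfl
    rw [this, ← hS (Y (i : ℕ))]
    have ht := aca_tele f X Y r hr0 hrec Q x (Y (i : ℕ))
    have hz := aca_zc X Y r hpiv hrec Q (i : ℕ) i.isLt x
    linarith
  have h2 : ∀ i : Fin Q, ∑ j : Fin Q, cv' j * M j i = f x (Y (i : ℕ)) := by
    intro i
    calc ∑ j : Fin Q, cv' j * M j i
        = ∑ j : Fin Q, ∑ k : Fin Q, f x (Y (k : ℕ)) * (M⁻¹ k j * M j i) := by
          refine Finset.sum_congr rfl fun j _ => ?_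
          rw [hcv', Finset.sum_mul]
          exact Finset.sum_congr rfl fun k _ => by ring
      _ = ∑ k : Fin Q, f x (Y (k : ℕ)) * ∑ j : Fin Q, M⁻¹ k j * M j i := by
          rw [Finset.sum_comm]
          exact Finset.sum_congr rfl fun k _ => by rw [Finset.mul_sum]
      _ = ∑ k : Fin Q, f x (Y (k : ℕ)) * (1 : Matrix (Fin Q) (Fin Q) ℝ) k i := by
          refine Finset.sum_congr rfl fun k _ => ?_
          rw [← Matrix.mul_apply, Matrix.nonsing_inv_mul M hMinv]
      _ = f x (Y (i : ℕ)) := by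
          simp [Matrix.one_apply, mul_ite]
  have hvm : Matrix.vecMul cv M = Matrix.vecMul cv' M := by
    funext i
    simp only [Matrix.vecMul, dotProduct]
    rw [h1 i, h2 i]
  have hcveq : cv = cv' := by
    have h := congrArg (fun v => Matrix.vecMul v M⁻¹) hvm
    simpa [Matrix.vecMul_vecMul, Matrix.mul_nonsing_inv M hMinv] using h
  have hfirst : (∑ q ∈ Finset.range Q, r q x (Y q) * r q (X q) y / r q (X q) (Y q))
      = ∑ i : Fin Q, ∑ j : Fin Q, f x (Y (i : ℕ)) * M⁻¹ i j * f (X (j : ℕ)) y := by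
    rw [hS y, Finset.sum_range fun j => cN j * f (X j) y]
    calc ∑ j : Fin Q, cv j * f (X (j : ℕ)) y
        = ∑ j : Fin Q, cv' j * f (X (j : ℕ)) y := by rw [hcveq]
      _ = ∑ i : Fin Q, ∑ j : Fin Q, f x (Y (i : ℕ)) * M⁻¹ i j * f (X (j : ℕ)) y := by
          rw [Finset.sum_comm]
          refine Finset.sum_congr rfl fun j _ => ?_
          rw [hcv', Finset.sum_mul]
  refine ⟨hfirst, ?_⟩
  have ht := aca_tele f X Y r hr0 hrec Q x y
  rw [hfirst] at ht
  exact ht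
end

section
/- Let $B \in \mathbb{R}^{M \times N}$ be a matrix with $B_{i,j} \neq 0$ for some indices $i, j$. Then the matrix $C = B - \frac{1}{B_{i,j}} B_{:,j}\, B_{i,:}$ (where $B_{:,j}$ is the $j$-th column and $B_{i,:}$ the $i$-th row) satisfies $\mathrm{rank}(C) = \mathrm{rank}(B) - 1$. -/
/-!
The columns of `B` are those of `C` shifted by multiples of `B_{:,j}`, so the column space of `B`
is that of `C` plus the line through `B_{:,j}`. Row `i` of `C` vanishes while `B_{i,j} ≠ 0`, so
`B_{:,j}` is not in the column space of `C`, and the dimension goes up by exactly one.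
-/

open Matrix

namespace Matrix

variable {K m n : Type*} [Field K]

def wedderburnUpdate (B : Matrix m n K) (i : m) (j : n) : Matrix m n K :=
  B - (B i j)⁻¹ • vecMulVec (B.col j) (B.row i)

theorem wedderburnUpdate_apply (B : Matrix m n K) (i : m) (j : n) (a : m) (b : n) :
    B.wedderburnUpdate i j a b = B a b - B a j * B i b / B i j := by
  simp only [wedderburnUpdate, sub_apply, smul_apply, vecMulVec_apply, col_apply, row_apply,
    smul_eq_mul]
  ring

theorem row_wedderburnUpdate_self {B : Matrix m n K} {i : m} {j : n} (hij : B i j ≠ 0) :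
    (B.wedderburnUpdate i j).row i = 0 := by
  ext b
  simp only [row_apply, wedderburnUpdate_apply, Pi.zero_apply]
  field_simp
  ring

theorem col_wedderburnUpdate (B : Matrix m n K) (i : m) (j : n) (b : n) :
    (B.wedderburnUpdate i j).col b = B.col b - (B i b / B i j) • B.col j := by
  ext a
  simp only [col_apply, wedderburnUpdate_apply, Pi.sub_apply, Pi.smul_apply, smul_eq_mul]
  ring

theorem span_range_col_le_ker_proj {A : Matrix m n K} {i : m} (hi : A.row i = 0) :
    Submodule.span K (Set.range A.col) ≤ LinearMap.ker (LinearMap.proj i) := by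
  rw [Submodule.span_le]
  rintro _ ⟨b, rfl⟩
  exact congrFun hi b

theorem span_range_col_eq_sup_wedderburnUpdate (B : Matrix m n K) (i : m) (j : n) :
    Submodule.span K (Set.range B.col) =
      Submodule.span K (Set.range (B.wedderburnUpdate i j).col) ⊔ K ∙ B.col j := by
  apply le_antisymm
  · rw [Submodule.span_le]
    rintro _ ⟨b, rfl⟩
    have hb : B.col b = (B.wedderburnUpdate i j).col b + (B i b / B i j) • B.col j := by
      rw [col_wedderburnUpdate, sub_add_cancel]
    rw [SetLike.mem_coe, hb]
    exact Submodule.add_mem_sup (Submodule.subset_span ⟨b, rfl⟩)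
      (Submodule.smul_mem _ _ (Submodule.mem_span_singleton_self _))
  · refine sup_le ?_ ((Submodule.span_singleton_le_iff_mem _ _).mpr
      (Submodule.subset_span ⟨j, rfl⟩))
    rw [Submodule.span_le]
    rintro _ ⟨b, rfl⟩
    rw [SetLike.mem_coe, col_wedderburnUpdate]
    exact Submodule.sub_mem _ (Submodule.subset_span ⟨b, rfl⟩)
      (Submodule.smul_mem _ _ (Submodule.subset_span ⟨j, rfl⟩))

theorem col_notMem_span_range_col_wedderburnUpdate {B : Matrix m n K} {i : m} {j : n}
    (hij : B i j ≠ 0) :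
    B.col j ∉ Submodule.span K (Set.range (B.wedderburnUpdate i j).col) :=
  fun h => hij (span_range_col_le_ker_proj (row_wedderburnUpdate_self hij) h)

theorem rank_wedderburnUpdate_add_one [Finite m] [Fintype n] {B : Matrix m n K} {i : m} {j : n}
    (hij : B i j ≠ 0) :
    (B.wedderburnUpdate i j).rank + 1 = B.rank := by
  rw [rank_eq_finrank_span_cols, rank_eq_finrank_span_cols,
    span_range_col_eq_sup_wedderburnUpdate B i j,
    Submodule.finrank_sup_span_singleton (col_notMem_span_range_col_wedderburnUpdate hij)]

end Matrix

/-- Wedderburn rank-one reduction: if `B i j ≠ 0`, then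
`C = B - B_{:,j} B_{i,:} / B_{i,j}` satisfies `rank C = rank B - 1`
(stated as `rank C + 1 = rank B`, the exact content since `rank B ≥ 1`). -/
theorem wedderburn_rank_one_reduction {M N : ℕ}
    (B : Matrix (Fin M) (Fin N) ℝ) (i : Fin M) (j : Fin N)
    (hij : B i j ≠ 0)
    (C : Matrix (Fin M) (Fin N) ℝ)
    (hC : ∀ a b, C a b = B a b - B a j * B i b / B i j) :
    C.rank + 1 = B.rank := by
  obtain rfl : C = B.wedderburnUpdate i j := by
    ext a b
    rw [hC, wedderburnUpdate_apply]
  exact rank_wedderburnUpdate_add_one hij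
end

section
/- Let $f_y \in C^0(\Omega_x)$ for $y \in \Omega_y$, let $\mathfrak{I}_Q$ be the cross interpolation operator at nodes $x_1,\dots,x_Q$, $y_1,\dots,y_Q$ with $M_Q = [f(x_i,y_j)]$ invertible, and let $\mathfrak{I}'_Q$ be the interpolation operator onto an auxiliary system $\mathbb{W}_Q = \mathrm{span}\{w_1,\dots,w_Q\}$ at the same nodes $x_1,\dots,x_Q$, assuming the Vandermonde matrix $[w_i(x_j)]$ is invertible. Then for every $y \in \Omega_y$: $\|f_y - \mathfrak{I}_Q[f_y]\|_{L^\infty(\Omega_x)} \le (1 + \sigma_2[f]) \max_{z \in \{y, y_1, \dots, y_Q\}} \|f_z - \mathfrak{I}'_Q[f_z]\|_{L^\infty(\Omega_x)}$, where $\sigma_2[f] = \sup_{y \in \Omega_y} \|M_Q^{-1}(f(x_1,y),\dots,f(x_Q,y))^T\|_{\ell^1}$. -/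
/-- Error estimate for the cross approximation via an auxiliary interpolation system:
`‖f_y - 𝔍_Q[f_y]‖_∞ ≤ (1 + σ₂[f]) max_{z∈{y,y₁,…,y_Q}} ‖f_z - 𝔍'_Q[f_z]‖_∞`, stated
sup-free: any bound `σ` on `σ₂[f]` and any bound `ε` on the auxiliary interpolation
errors of `f_y, f_{y₁}, …, f_{y_Q}` yield the pointwise bound `(1 + σ) ε`. -/
theorem cross_approximation_error_estimate {Ωx Ωy : Type*} {Q : ℕ}
    (f : Ωx → Ωy → ℝ) (X : Fin Q → Ωx) (Y : Fin Q → Ωy)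
    (M : Matrix (Fin Q) (Fin Q) ℝ) (hM : M = Matrix.of fun i j => f (X i) (Y j))
    (hMinv : IsUnit M.det)
    -- Lagrange functions of the auxiliary system 𝕎_Q at the nodes X
    (L : Fin Q → Ωx → ℝ) (hL : ∀ i j : Fin Q, L i (X j) = if i = j then 1 else 0)
    -- the auxiliary interpolation operator 𝔍'_Q
    (Interp' : (Ωx → ℝ) → Ωx → ℝ)
    (hI' : ∀ (g : Ωx → ℝ) (x : Ωx), Interp' g x = ∑ i : Fin Q, g (X i) * L i x)
    -- the cross interpolant 𝔍_Q
    (Interp : Ωx → Ωy → ℝ)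
    (hI : ∀ (x : Ωx) (y : Ωy),
      Interp x y = ∑ i : Fin Q, ∑ j : Fin Q, f x (Y i) * M⁻¹ i j * f (X j) y)
    -- a bound σ on σ₂[f]
    (σ : ℝ)
    (hσ : ∀ y : Ωy, ∑ q : Fin Q, |(M⁻¹.mulVec fun i => f (X i) y) q| ≤ σ)
    (y : Ωy) (ε : ℝ)
    (hεy : ∀ x : Ωx, |f x y - Interp' (fun x' => f x' y) x| ≤ ε)
    (hεY : ∀ (q : Fin Q) (x : Ωx), |f x (Y q) - Interp' (fun x' => f x' (Y q)) x| ≤ ε) :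
    ∀ x : Ωx, |f x y - Interp x y| ≤ (1 + σ) * ε := by
  intro x
  have hε0 : 0 ≤ ε := le_trans (abs_nonneg _) (hεy x)
  set c : Fin Q → ℝ := M⁻¹.mulVec (fun i => f (X i) y) with hc
  have hMc : ∀ i : Fin Q, ∑ q : Fin Q, f (X i) (Y q) * c q = f (X i) y := by
    intro i
    have h1 : M.mulVec c = fun i => f (X i) y := by
      rw [hc, Matrix.mulVec_mulVec, Matrix.mul_nonsing_inv M hMinv, Matrix.one_mulVec]
    have h2 := congrFun h1 i
    simpa [Matrix.mulVec, dotProduct, hM] using h2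
  have key : f x y - Interp x y
      = (f x y - Interp' (fun x' => f x' y) x)
        - ∑ q : Fin Q, (f x (Y q) - Interp' (fun x' => f x' (Y q)) x) * c q := by
    rw [hI, hI' (fun x' => f x' y) x]
    have hIc : ∑ i : Fin Q, ∑ j : Fin Q, f x (Y i) * M⁻¹ i j * f (X j) y
        = ∑ i : Fin Q, f x (Y i) * c i := by
      refine Finset.sum_congr rfl fun i _ => ?_
      rw [hc]
      simp [Matrix.mulVec, dotProduct, Finset.mul_sum, mul_assoc]
    rw [hIc]
    have hswap : ∑ q : Fin Q, (Interp' (fun x' => f x' (Y q)) x) * c q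
        = ∑ i : Fin Q, f (X i) y * L i x := by
      calc ∑ q : Fin Q, (Interp' (fun x' => f x' (Y q)) x) * c q
          = ∑ q : Fin Q, ∑ i : Fin Q, f (X i) (Y q) * L i x * c q := by
            refine Finset.sum_congr rfl fun q _ => ?_
            rw [hI' (fun x' => f x' (Y q)) x, Finset.sum_mul]
        _ = ∑ i : Fin Q, ∑ q : Fin Q, f (X i) (Y q) * L i x * c q :=
            Finset.sum_comm
        _ = ∑ i : Fin Q, f (X i) y * L i x := by
            refine Finset.sum_congr rfl fun i _ => ?_
            have h3 : ∑ q : Fin Q, f (X i) (Y q) * L i x * c q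
                = (∑ q : Fin Q, f (X i) (Y q) * c q) * L i x := by
              rw [Finset.sum_mul]
              exact Finset.sum_congr rfl fun q _ => by ring
            rw [h3, hMc i]
    have hsub : ∑ q : Fin Q, (f x (Y q) - Interp' (fun x' => f x' (Y q)) x) * c q
        = ∑ q : Fin Q, f x (Y q) * c q
          - ∑ q : Fin Q, (Interp' (fun x' => f x' (Y q)) x) * c q := by
      rw [← Finset.sum_sub_distrib]
      exact Finset.sum_congr rfl fun q _ => by ring
    rw [hsub, hswap]
    ring
  rw [key]
  calc |(f x y - Interp' (fun x' => f x' y) x)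
        - ∑ q : Fin Q, (f x (Y q) - Interp' (fun x' => f x' (Y q)) x) * c q|
      ≤ |f x y - Interp' (fun x' => f x' y) x|
        + |∑ q : Fin Q, (f x (Y q) - Interp' (fun x' => f x' (Y q)) x) * c q| :=
        abs_sub _ _
    _ ≤ ε + ∑ q : Fin Q, |(f x (Y q) - Interp' (fun x' => f x' (Y q)) x) * c q| := by
        gcongr
        · exact hεy x
        · exact Finset.abs_sum_le_sum_abs _ _
    _ ≤ ε + ∑ q : Fin Q, ε * |c q| := by
        gcongr ε + ∑ q : Fin Q, ?_ with q _
        rw [abs_mul]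
        gcongr
        exact hεY q x
    _ = ε + ε * ∑ q : Fin Q, |c q| := by rw [Finset.mul_sum]
    _ ≤ ε + ε * σ := by
        gcongr
        exact hσ y
    _ = (1 + σ) * ε := by ring
end

section
/- In the Empirical Interpolation Method with basis functions $h_1, \dots, h_q$ and interpolation points $x_1, \dots, x_q$ constructed by the greedy algorithm (with nonzero normalization denominators at each step), the interpolation matrix $B_{i,j} = h_j(x_i)$ is lower triangular with unit diagonal: $h_i(x_i) = 1$ for all $i = 1,\dots,q$ and $h_j(x_i) = 0$ for all $1 \le i < j \le q$. In particular $B$ is invertible. -/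
/-- The EIM interpolation matrix `B_{i,j} = h_j(x_i)` is lower triangular with unit
diagonal, hence invertible. The greedy construction is encoded by: `h_j` is the
normalized remainder `(f_{y_j} - I_{j-1}[f_{y_j}])/(f_{y_j}(x_j) - I_{j-1}[f_{y_j}](x_j))`,
where `u j = I_{j-1}[f_{y_j}]` lies in the span of the previous basis functions and
interpolates `f_{y_j}` at the previous points. -/
theorem eim_matrix_lower_triangular {Ωx : Type*} {q : ℕ}
    (F : Fin q → Ωx → ℝ)   -- the selected snapshots f_{y_j}
    (X : Fin q → Ωx)       -- the interpolation points x_j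
    (h : Fin q → Ωx → ℝ)   -- the EIM basis functions
    (u : Fin q → Ωx → ℝ)   -- u j = I_{j-1}[f_{y_j}]
    (hu_mem : ∀ j : Fin q, u j ∈ Submodule.span ℝ (h '' {k : Fin q | k < j}))
    (hu_int : ∀ j i : Fin q, i < j → u j (X i) = F j (X i))
    (hden : ∀ j : Fin q, F j (X j) - u j (X j) ≠ 0)
    (hh : ∀ (j : Fin q) (x : Ωx), h j x = (F j x - u j x) / (F j (X j) - u j (X j))) :
    (∀ i : Fin q, h i (X i) = 1) ∧
    (∀ i j : Fin q, i < j → h j (X i) = 0) ∧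
    IsUnit (Matrix.of fun i j : Fin q => h j (X i)).det := by
  have hdiag : ∀ i : Fin q, h i (X i) = 1 := fun i => by
    rw [hh i (X i), div_self (hden i)]
  have hoff : ∀ i j : Fin q, i < j → h j (X i) = 0 := fun i j hij => by
    rw [hh j (X i), hu_int j i hij, sub_self, zero_div]
  refine ⟨hdiag, hoff, ?_⟩
  have ht : (Matrix.of fun i j : Fin q => h j (X i)).BlockTriangular OrderDual.toDual := by
    intro i j hij
    exact hoff i j hij
  rw [Matrix.det_of_lowerTriangular _ ht]
  simp [Matrix.diag, hdiag]
end

section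
/- Let $h_1, \dots, h_q$ be the EIM basis functions, normalized so that $\|h_j\|_{L^\infty(\Omega_x)} \le 1$ for all $j$ (which holds when the greedy interpolation point $x_j$ is a maximizer of $|f_{y_j} - I_{j-1}[f_{y_j}]|$), with the lower triangular unit-diagonal interpolation matrix $B_{i,j} = h_j(x_i)$ satisfying $|B_{i,j}| \le 1$ for all $i \ge j$. Then the Lebesgue constant satisfies $\Lambda_q = \sup_{x \in \Omega_x} \sum_{i=1}^q |L_i(x)| \le 2^q - 1$, where $L_i = \sum_j (B^{-1})_{j,i}\, h_j$ are the Lagrange functions. -/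
/-- The EIM Lebesgue constant bound `Λ_q ≤ 2^q - 1`: if the basis functions satisfy
`‖h_j‖_∞ ≤ 1` and the interpolation matrix `B_{i,j} = h_j(x_i)` is lower triangular
with unit diagonal and entries bounded by one, then the Lagrange functions
`L_i = ∑_j (B⁻¹)_{j,i} h_j` satisfy `∑_i |L_i(x)| ≤ 2^q - 1` for every `x`. -/
theorem eim_lebesgue_constant_bound {Ω : Type*} {q : ℕ}
    (h : Fin q → Ω → ℝ) (X : Fin q → Ω)
    (hbound : ∀ (j : Fin q) (x : Ω), |h j x| ≤ 1)
    (B : Matrix (Fin q) (Fin q) ℝ) (hB : B = Matrix.of fun i j => h j (X i))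
    (htri : ∀ i j : Fin q, i < j → B i j = 0)
    (hdiag : ∀ i : Fin q, B i i = 1)
    (hentries : ∀ i j : Fin q, |B i j| ≤ 1)
    (L : Fin q → Ω → ℝ)
    (hL : ∀ (i : Fin q) (x : Ω), L i x = ∑ j : Fin q, B⁻¹ j i * h j x) :
    ∀ x : Ω, ∑ i : Fin q, |L i x| ≤ 2 ^ q - 1 := by
  have hdet : B.det = 1 := by
    rw [Matrix.det_of_lowerTriangular B (fun i j hij => htri _ _ hij)]
    simp [hdiag]
  have hmul : B * B⁻¹ = 1 := Matrix.mul_nonsing_inv B (by rw [hdet]; exact isUnit_one)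
  set C := B⁻¹ with hC
  -- recursion formula
  have hrec : ∀ j i : Fin q, C j i = (if j = i then (1:ℝ) else 0)
      - ∑ k ∈ Finset.Iio j, B j k * C k i := by
    intro j i
    have h1 : ∑ k, B j k * C k i = (if j = i then (1:ℝ) else 0) := by
      have := congrFun (congrFun hmul j) i
      simpa [Matrix.mul_apply, Matrix.one_apply] using this
    have h2 : ∑ k, B j k * C k i = ∑ k ∈ Finset.Iic j, B j k * C k i := by
      symm
      apply Finset.sum_subset (Finset.subset_univ _)
      intro k _ hk
      rw [htri j k (by simpa using hk)]; ring
    rw [← Finset.Iio_insert, Finset.sum_insert (by simp), hdiag] at h2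
    rw [h2] at h1
    linarith
  -- row sum bound
  have geo : ∀ b : Fin q, ∑ k ∈ Finset.Iio b, (2:ℝ) ^ (k : ℕ) = 2 ^ (b:ℕ) - 1 := by
    intro b
    have hm : ∑ k ∈ Finset.Iio b, (2:ℝ) ^ (k : ℕ)
        = ∑ m ∈ Finset.Iio (b:ℕ), (2:ℝ) ^ m := by
      rw [← Fin.map_valEmbedding_Iio, Finset.sum_map]; rfl
    rw [hm, Nat.Iio_eq_range, geom_sum_eq (by norm_num : (2:ℝ) ≠ 1)]
    ring
  have key : ∀ n : ℕ, ∀ j : Fin q, (j:ℕ) = n → ∑ i, |C j i| ≤ 2 ^ (j : ℕ) := by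
    intro n
    induction n using Nat.strong_induction_on with
    | _ n ih0 =>
      intro j hjn
      have step : ∀ i, |C j i| ≤ (if j = i then (1:ℝ) else 0) + ∑ k ∈ Finset.Iio j, |C k i| := by
        intro i
        rw [hrec j i]
        refine (abs_sub _ _).trans ?_
        gcongr
        · split <;> simp
        · refine (Finset.abs_sum_le_sum_abs _ _).trans ?_
          apply Finset.sum_le_sum
          intro k _
          rw [abs_mul]
          calc |B j k| * |C k i| ≤ 1 * |C k i| := by
                apply mul_le_mul_of_nonneg_right (hentries j k) (abs_nonneg _)
            _ = |C k i| := one_mul _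
      calc ∑ i, |C j i| ≤ ∑ i, ((if j = i then (1:ℝ) else 0) + ∑ k ∈ Finset.Iio j, |C k i|) :=
            Finset.sum_le_sum (fun i _ => step i)
        _ = 1 + ∑ k ∈ Finset.Iio j, ∑ i, |C k i| := by
            rw [Finset.sum_add_distrib, Finset.sum_comm]
            congr 1
            simp
        _ ≤ 1 + ∑ k ∈ Finset.Iio j, (2:ℝ) ^ (k : ℕ) := by
            gcongr with k hk
            have hkj : k < j := Finset.mem_Iio.mp hk
            exact ih0 (k:ℕ) (by omega) k rfl
        _ ≤ 1 + ((2:ℝ) ^ (j:ℕ) - 1) := by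
            rw [← geo j]
        _ = 2 ^ (j:ℕ) := by ring
  intro x
  calc ∑ i, |L i x| ≤ ∑ i, ∑ j, |C j i| := by
        apply Finset.sum_le_sum
        intro i _
        rw [hL]
        refine (Finset.abs_sum_le_sum_abs _ _).trans ?_
        apply Finset.sum_le_sum
        intro j _
        rw [abs_mul]
        calc |C j i| * |h j x| ≤ |C j i| * 1 :=
              mul_le_mul_of_nonneg_left (hbound j x) (abs_nonneg _)
          _ = |C j i| := mul_one _
    _ = ∑ j, ∑ i, |C j i| := Finset.sum_comm
    _ ≤ ∑ j : Fin q, (2:ℝ) ^ (j:ℕ) := Finset.sum_le_sum (fun j _ => key (j:ℕ) j rfl)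
    _ = ∑ m ∈ Finset.range q, (2:ℝ) ^ m := Fin.sum_univ_eq_sum_range _ _
    _ = 2 ^ q - 1 := by
        rw [geom_sum_eq (by norm_num : (2:ℝ) ≠ 1)]; ring
end

section
/- Let $L$ be a lower triangular $q \times q$ real matrix with $L_{ii} = 1$ for all $i$ and $|L_{ij}| \le 1$ for all $i > j$. Then the entries of $L^{-1}$ satisfy $|(L^{-1})_{ij}| \le 2^{i-j-1}$ for $i > j$, and $(L^{-1})_{ii} = 1$. -/
/-!
Both `L` and `L⁻¹` are unit lower triangular, so `L * L⁻¹ = 1` gives, for `j < i`, the forward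
substitution `L⁻¹ i j = -(L i j + ∑_{j < k < i} L i k * L⁻¹ k j)`. With `|L i k| ≤ 1`, the
numbers `|L⁻¹ i j|` are dominated by the solution of `c i = 1 + ∑_{j < k < i} c k`, which is
`2 ^ (i - j - 1)`.
-/

open Finset

namespace Matrix

variable {n R : Type*} [Fintype n] [LinearOrder n]

section Semiring

variable [LocallyFiniteOrder n] [NonUnitalNonAssocSemiring R] {A B : Matrix n n R}

theorem IsLowerTriangular.mul_apply (hA : A.IsLowerTriangular) (hB : B.IsLowerTriangular)
    (i j : n) : (A * B) i j = ∑ k ∈ Icc j i, A i k * B k j := by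
  rw [Matrix.mul_apply]
  refine (sum_subset (subset_univ _) fun k _ hk => ?_).symm
  rcases lt_or_ge k j with hkj | hjk
  · rw [hB hkj, mul_zero]
  · have hik : i < k := lt_of_not_ge fun hki => hk (mem_Icc.2 ⟨hjk, hki⟩)
    rw [hA hik, zero_mul]

theorem IsLowerTriangular.mul_apply_self (hA : A.IsLowerTriangular) (hB : B.IsLowerTriangular)
    (i : n) : (A * B) i i = A i i * B i i := by
  rw [hA.mul_apply hB, Icc_self, sum_singleton]

end Semiring

section CommRing

variable [CommRing R] {A : Matrix n n R}

theorem IsLowerTriangular.inv (hA : A.IsLowerTriangular) : A⁻¹.IsLowerTriangular := by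
  by_cases hdet : IsUnit A.det
  · have := A.invertibleOfIsUnitDet hdet
    exact blockTriangular_inv_of_blockTriangular hA
  · rw [nonsing_inv_apply_not_isUnit A hdet]
    exact blockTriangular_zero

theorem IsLowerTriangular.det_eq_one (hA : A.IsLowerTriangular) (hdiag : ∀ i, A i i = 1) :
    A.det = 1 := by
  simp [det_of_isLowerTriangular A hA, hdiag]

variable [LocallyFiniteOrder n]

theorem IsLowerTriangular.inv_apply_self (hA : A.IsLowerTriangular) (hdiag : ∀ i, A i i = 1)
    (i : n) : A⁻¹ i i = 1 := by
  have h := congrFun₂ (nonsing_inv_mul A (by simp [hA.det_eq_one hdiag])) i i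
  rwa [hA.inv.mul_apply_self hA, hdiag, mul_one, one_apply_eq] at h

theorem IsLowerTriangular.inv_apply_of_lt (hA : A.IsLowerTriangular) (hdiag : ∀ i, A i i = 1)
    {i j : n} (hji : j < i) : A⁻¹ i j = -(A i j + ∑ k ∈ Ioo j i, A i k * A⁻¹ k j) := by
  have h := congrFun₂ (mul_nonsing_inv A (by simp [hA.det_eq_one hdiag])) i j
  rw [hA.mul_apply hA.inv, Icc_eq_cons_Ico hji.le, sum_cons, Ico_eq_cons_Ioo hji, sum_cons,
    hdiag, hA.inv_apply_self hdiag, one_apply_ne hji.ne'] at h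
  linear_combination h

end CommRing

end Matrix

theorem Nat.one_add_sum_Ioo_two_pow {a b : ℕ} (hab : a < b) :
    1 + ∑ t ∈ Ioo a b, (2 : ℝ) ^ (t - a - 1) = 2 ^ (b - a - 1) := by
  induction b, hab using Nat.le_induction with
  | base => simp [Ioo_add_one_right_eq_Ioc]
  | succ b hab ih =>
    rw [Ioo_add_one_right_eq_Ioc, Ioc_eq_cons_Ioo hab, sum_cons, add_left_comm, ih,
      show b + 1 - a - 1 = b - a - 1 + 1 by omega, pow_succ]
    ring

theorem Fin.one_add_sum_Ioo_two_pow {q : ℕ} {j i : Fin q} (hji : j < i) :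
    1 + ∑ k ∈ Ioo j i, (2 : ℝ) ^ ((k : ℕ) - j - 1) = 2 ^ ((i : ℕ) - j - 1) := by
  rw [← Nat.one_add_sum_Ioo_two_pow hji, ← Fin.map_valEmbedding_Ioo, sum_map]
  rfl

theorem Fin.le_two_pow_of_le_one_add_sum {q : ℕ} {c : Fin q → ℝ} {j : Fin q}
    (hc : ∀ i, j < i → c i ≤ 1 + ∑ k ∈ Ioo j i, c k) (i : Fin q) (hji : j < i) :
    c i ≤ 2 ^ ((i : ℕ) - j - 1) := by
  induction i using WellFoundedLT.induction with
  | ind i ih =>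
    calc c i ≤ 1 + ∑ k ∈ Ioo j i, c k := hc i hji
      _ ≤ 1 + ∑ k ∈ Ioo j i, (2 : ℝ) ^ ((k : ℕ) - j - 1) := by
        gcongr with k hk
        exact ih k (mem_Ioo.1 hk).2 (mem_Ioo.1 hk).1
      _ = 2 ^ ((i : ℕ) - j - 1) := Fin.one_add_sum_Ioo_two_pow hji

/-- Entries of the inverse of a unit lower triangular matrix with entries bounded by one:
`|(L⁻¹)_{ij}| ≤ 2^{i-j-1}` for `i > j`, and `(L⁻¹)_{ii} = 1`. -/
theorem unit_lower_triangular_inverse_bound {q : ℕ}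
    (L : Matrix (Fin q) (Fin q) ℝ)
    (htri : ∀ i j : Fin q, i < j → L i j = 0)
    (hdiag : ∀ i : Fin q, L i i = 1)
    (hentries : ∀ i j : Fin q, j < i → |L i j| ≤ 1) :
    (∀ i j : Fin q, j < i → |L⁻¹ i j| ≤ 2 ^ ((i : ℕ) - (j : ℕ) - 1)) ∧
    (∀ i : Fin q, L⁻¹ i i = 1) := by
  have hL : L.IsLowerTriangular := fun i j hij => htri i j hij
  refine ⟨fun i j hji => Fin.le_two_pow_of_le_one_add_sum (c := fun i => |L⁻¹ i j|)
    (fun i hji => ?_) i hji, hL.inv_apply_self hdiag⟩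
  rw [hL.inv_apply_of_lt hdiag hji, abs_neg]
  calc |L i j + ∑ k ∈ Ioo j i, L i k * L⁻¹ k j|
      ≤ |L i j| + ∑ k ∈ Ioo j i, |L i k| * |L⁻¹ k j| := by
        grw [abs_add_le, abs_sum_le_sum_abs]
        simp only [abs_mul, le_refl]
    _ ≤ 1 + ∑ k ∈ Ioo j i, |L⁻¹ k j| := by
        gcongr with k hk
        · exact hentries i j hji
        · exact mul_le_of_le_one_left (abs_nonneg _) (hentries i k (mem_Ioo.1 hk).2)
end

section
/- The Bivariate Adaptive Cross Approximation with global pivoting is equivalent to the Empirical Interpolation Method with the $L^\infty(\Omega_x)$-norm: if at every step $q$, EIM selects $y_q = \arg\sup_y \|f_y - I_{q-1}[f_y]\|_{L^\infty(\Omega_x)}$ and $x_q = \arg\sup_x |f_{y_q}(x) - I_{q-1}[f_{y_q}](x)|$, while ACA selects $(x_q, y_q) = \arg\sup_{(x,y)} |r_{q-1}(x,y)|$, then (assuming the maxima are attained at the same unique points) for all $q$: (1) the selected points coincide, (2) the EIM coefficient satisfies $g_q(y) = r_{q-1}(x_q, y)$ for all $y$, and (3) $I_q[f_y](x) = \mathfrak{I}_q[f_y](x)$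 for all $(x,y) \in \Omega_x \times \Omega_y$. -/
/-- Equivalence of bivariate ACA with global pivoting and EIM with the `L^∞`-norm.
ACA: remainders `r` with pivots `(XA q, YA q)` maximizing `|r_q|` (hypotheses `hAmax`,
uniqueness `hAuniq`). EIM: basis `h`, coefficients `g`, interpolant
`I q y x = ∑_{j<q} g j y * h j x`, greedy points `(XE q, YE q)` at which the attained
maximum of the `L^∞` error is realized (`hEmax`). Conclusions: (1) the selected points
coincide, (2) `g_q(y) = r_{q-1}(x_q, y)`, and (3) `I_q[f_y] = 𝔍_q[f_y]` where
`𝔍_q[f_y](x) = ∑_{p<q} r_p(x,y_p) r_p(x_p,y)/r_p(x_p,y_p)`. -/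
theorem aca_global_pivoting_equiv_eim {Ωx Ωy : Type*}
    (f : Ωx → Ωy → ℝ)
    -- ACA data
    (XA : ℕ → Ωx) (YA : ℕ → Ωy) (r : ℕ → Ωx → Ωy → ℝ)
    (hr0 : r 0 = f)
    (hpiv : ∀ q, r q (XA q) (YA q) ≠ 0)
    (hrec : ∀ q x y,
      r (q + 1) x y = r q x y - r q x (YA q) * r q (XA q) y / r q (XA q) (YA q))
    -- global pivoting: (XA q, YA q) is the unique maximizer of |r q|
    (hAmax : ∀ q x y, |r q x y| ≤ |r q (XA q) (YA q)|)
    (hAuniq : ∀ q x y, (∀ x' y', |r q x' y'| ≤ |r q x y|) → x = XA q ∧ y = YA q)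
    -- EIM data
    (XE : ℕ → Ωx) (YE : ℕ → Ωy) (h : ℕ → Ωx → ℝ) (g : ℕ → Ωy → ℝ)
    (I : ℕ → Ωy → Ωx → ℝ)
    (hI : ∀ q y x, I q y x = ∑ j ∈ Finset.range q, g j y * h j x)
    -- the EIM basis function: normalized remainder
    (hEh : ∀ q x, h q x
      = (f x (YE q) - I q (YE q) x) / (f (XE q) (YE q) - I q (YE q) (XE q)))
    (hEden : ∀ q, f (XE q) (YE q) - I q (YE q) (XE q) ≠ 0)
    -- the interpolation conditions defining the coefficients g
    (hEint : ∀ q y, ∀ i < q, I q y (XE i) = f (XE i) y)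
    -- EIM greedy selection in L^∞: the maximum of the error is attained at (XE q, YE q)
    (hEmax : ∀ q x y, |f x y - I q y x| ≤ |f (XE q) (YE q) - I q (YE q) (XE q)|) :
    (∀ q, XE q = XA q ∧ YE q = YA q) ∧
    (∀ q y, g q y = r q (XE q) y) ∧
    (∀ q y x, I q y x
      = ∑ p ∈ Finset.range q, r p x (YA p) * r p (XA p) y / r p (XA p) (YA p)) := by
  -- key identity: r q x y = f x y - 𝔍 q
  have hkey : ∀ q x y, r q x y
      = f x y - ∑ p ∈ Finset.range q, r p x (YA p) * r p (XA p) y / r p (XA p) (YA p) := by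
    intro q
    induction q with
    | zero => intro x y; simp [hr0]
    | succ q ih =>
      intro x y
      rw [hrec, Finset.sum_range_succ, ih, ih, ih]
      ring
  -- from Q q we get r q x y = f x y - I q y x
  have hrI : ∀ q, (∀ y x, I q y x
      = ∑ p ∈ Finset.range q, r p x (YA p) * r p (XA p) y / r p (XA p) (YA p)) →
      ∀ x y, r q x y = f x y - I q y x := by
    intro q hQ x y
    rw [hkey, hQ]
  -- points coincide
  have points : ∀ q, (∀ y x, I q y x
      = ∑ p ∈ Finset.range q, r p x (YA p) * r p (XA p) y / r p (XA p) (YA p)) →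
      XE q = XA q ∧ YE q = YA q := by
    intro q hQ
    refine hAuniq q (XE q) (YE q) ?_
    intro x' y'
    rw [hrI q hQ, hrI q hQ]
    exact hEmax q x' y'
  -- the coefficient identity
  have gcoef : ∀ q, (∀ y x, I q y x
      = ∑ p ∈ Finset.range q, r p x (YA p) * r p (XA p) y / r p (XA p) (YA p)) →
      ∀ y, g q y = r q (XE q) y := by
    intro q hQ y
    have h1 : h q (XE q) = 1 := by
      rw [hEh]
      exact div_self (hEden q)
    have hint := hEint (q + 1) y q (Nat.lt_succ_self q)
    rw [hI, Finset.sum_range_succ, h1, mul_one, ← hI] at hint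
    have : g q y = f (XE q) y - I q y (XE q) := by linarith
    rw [this, hrI q hQ]
  -- the inductive step for Q
  have Qall : ∀ q, ∀ y x, I q y x
      = ∑ p ∈ Finset.range q, r p x (YA p) * r p (XA p) y / r p (XA p) (YA p) := by
    intro q
    induction q with
    | zero => intro y x; simp [hI]
    | succ q ih =>
      intro y x
      obtain ⟨hx, hy⟩ := points q ih
      have hh : h q x = r q x (YA q) / r q (XA q) (YA q) := by
        rw [hEh, ← hrI q ih, ← hrI q ih, hx, hy]
      rw [hI, Finset.sum_range_succ, ← hI, ih, Finset.sum_range_succ, gcoef q ih,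
        hh, hx]
      ring
  exact ⟨fun q => points q (Qall q), fun q => gcoef q (Qall q), Qall⟩
end
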